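/- Let (K,D_K) ⊆ (L,D_L) be an extension of 𝔤-fields and assume (K,D_K) is strict. Then the field extension K ⊆ L is separable; equivalently (MacLane's criterion), K and L^p are linearly disjoint over K^p inside L: every finite family of elements of K that is linearly independent over K^p remains linearly independent over L^p when regarded in L. -/

import Mathlib

open scoped TensorProduct

noncomputable section

/-- The ideal `(X₁^pm, …, X_e^pm)` of the polynomial ring `k[X₁,…,X_e]`. -/
def TruncIdeal (k : Type*) [CommRing k] (e pm : ℕ) : Ideal (MvPolynomial (Fin e) k) :=
  Ideal.span (Set.range fun t : Fin e => (MvPolynomial.X t : MvPolynomial (Fin e) k) ^ pm)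

/-- The truncated polynomial algebra `A = k[X₁,…,X_e]/(X₁^pm, …, X_e^pm)`. -/
abbrev TruncAlg (k : Type*) [CommRing k] (e pm : ℕ) :=
  MvPolynomial (Fin e) k ⧸ TruncIdeal k e pm

/-- The image of the monomial `X^i` in the truncated polynomial algebra. -/
def XA (k : Type*) [CommRing k] (e pm : ℕ) (i : Fin e →₀ ℕ) : TruncAlg k e pm :=
  Ideal.Quotient.mk (TruncIdeal k e pm) (MvPolynomial.monomial i (1 : k))

/-- The finite set `[pm]^e` of multi-indices `i` with `i t ≤ pm - 1` for all `t`. -/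
def box (e pm : ℕ) : Finset (Fin e →₀ ℕ) :=
  Finset.Iic (Finsupp.equivFunOnFinite.symm fun _ => pm - 1)

/-- The total degree `|i| = i 1 + … + i e` of a multi-index. -/
def mdeg {e : ℕ} (i : Fin e →₀ ℕ) : ℕ := ∑ t, i t

/-- A `k`-Hopf algebra structure on the truncated polynomial algebra `A`, whose counit is
evaluation at `X = 0`; i.e. a truncated group scheme `𝔤` with underlying scheme `Spec A`. -/
structure TruncHopf (k : Type*) [CommRing k] (e pm : ℕ) where
  /-- the comultiplication `Δ : A → A ⊗[k] A`, a `k`-algebra homomorphism -/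
  comul : TruncAlg k e pm →ₐ[k] TruncAlg k e pm ⊗[k] TruncAlg k e pm
  /-- the counit `ε : A → k` -/
  counit : TruncAlg k e pm →ₐ[k] k
  /-- the counit is evaluation at `X = 0` -/
  counit_monomial : ∀ i : Fin e →₀ ℕ, counit (XA k e pm i) = if i = 0 then 1 else 0
  /-- coassociativity of `Δ` -/
  coassoc : (Algebra.TensorProduct.assoc k k k (TruncAlg k e pm) (TruncAlg k e pm)
        (TruncAlg k e pm)).toAlgHom.comp
        ((Algebra.TensorProduct.map comul (AlgHom.id k (TruncAlg k e pm))).comp comul)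
      = (Algebra.TensorProduct.map (AlgHom.id k (TruncAlg k e pm)) comul).comp comul
  /-- left counit axiom: `(ε ⊗ id) ∘ Δ = id` -/
  counit_comul_left : (Algebra.TensorProduct.lid k (TruncAlg k e pm)).toAlgHom.comp
        ((Algebra.TensorProduct.map counit (AlgHom.id k (TruncAlg k e pm))).comp comul)
      = AlgHom.id k (TruncAlg k e pm)
  /-- right counit axiom: `(id ⊗ ε) ∘ Δ = id` -/
  counit_comul_right : (Algebra.TensorProduct.rid k k (TruncAlg k e pm)).toAlgHom.comp
        ((Algebra.TensorProduct.map (AlgHom.id k (TruncAlg k e pm)) counit).comp comul)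
      = AlgHom.id k (TruncAlg k e pm)
  /-- the antipode `S : A → A` -/
  antipode : TruncAlg k e pm →ₗ[k] TruncAlg k e pm
  /-- left antipode axiom: `m ∘ (S ⊗ id) ∘ Δ = η ∘ ε` -/
  antipode_left : (LinearMap.mul' k (TruncAlg k e pm)).comp
        ((TensorProduct.map antipode LinearMap.id).comp comul.toLinearMap)
      = (Algebra.linearMap k (TruncAlg k e pm)).comp counit.toLinearMap
  /-- right antipode axiom: `m ∘ (id ⊗ S) ∘ Δ = η ∘ ε` -/
  antipode_right : (LinearMap.mul' k (TruncAlg k e pm)).comp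
        ((TensorProduct.map LinearMap.id antipode).comp comul.toLinearMap)
      = (Algebra.linearMap k (TruncAlg k e pm)).comp counit.toLinearMap

/-- An `pm`-truncated `e`-dimensional Hasse–Schmidt derivation on the commutative `k`-algebra
`R`, given by its family of coefficients `D i : R → R` (for multi-indices `i ∈ [pm]^e`):
equivalently, a `k`-algebra homomorphism `R → R ⊗[k] A` (with `A` the truncated polynomial
algebra in `e` variables) which is a section of the projection `R ⊗[k] A → R` killing the
variables. -/
structure TruncHSDer (k R : Type*) [CommRing k] [CommRing R] [Algebra k R] (e pm : ℕ) where
  /-- the coefficient maps `D_i`, each of which is `k`-linear -/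
  D : (Fin e →₀ ℕ) → R →ₗ[k] R
  D_zero : D 0 = LinearMap.id
  D_one : ∀ i : Fin e →₀ ℕ, i ≠ 0 → D i 1 = 0
  D_mul : ∀ i : Fin e →₀ ℕ, (∀ t, i t < pm) → ∀ x y : R,
    D i (x * y) = ∑ q ∈ Finset.HasAntidiagonal.antidiagonal i, D q.1 x * D q.2 y
  D_trunc : ∀ i : Fin e →₀ ℕ, (∃ t, pm ≤ i t) → D i = 0

/-- `D` is a `𝔤`-derivation for the truncated group scheme `𝔤` given by the Hopf algebra `H`:
the associated map `D : R → R ⊗[k] A`, `r ↦ ∑ᵢ Dᵢ(r) ⊗ X^i`, is coassociative, i.e.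
`(D ⊗ id_A) ∘ D = (id_R ⊗ Δ) ∘ D` (so `R` is an `A`-comodule algebra). -/
def IsGDer {k R : Type*} [CommRing k] [CommRing R] [Algebra k R] {e pm : ℕ}
    (H : TruncHopf k e pm) (D : TruncHSDer k R e pm) : Prop :=
  ∀ r : R,
    (TensorProduct.assoc k R (TruncAlg k e pm) (TruncAlg k e pm))
        (∑ i ∈ box e pm,
          (∑ j ∈ box e pm, D.D j (D.D i r) ⊗ₜ[k] XA k e pm j) ⊗ₜ[k] XA k e pm i)
      = ∑ i ∈ box e pm, D.D i r ⊗ₜ[k] H.comul (XA k e pm i)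

/-- `(K, D)` is strict: the ring of constants `⋂_{|i| = 1} ker Dᵢ` coincides with
`K^p = {x^p : x ∈ K}`. -/
def IsStrictT {k K : Type*} [CommRing k] [CommRing K] [Algebra k K] {e pm : ℕ} (p : ℕ)
    (D : TruncHSDer k K e pm) : Prop :=
  ∀ x : K, (∀ i : Fin e →₀ ℕ, mdeg i = 1 → D.D i x = 0) ↔ ∃ y : K, y ^ p = x

/-!
For `|i| = 1` the maps `Dᵢ` are derivations, and they kill `p`-th powers. Kolchin's argument
shows that constants of `L` which are linearly independent over the constants of `K` stay
linearly independent over `K`: in a shortest relation over `K`, normalise one coefficient to `1`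
and differentiate, which gives a shorter relation, so all coefficients are constants. By
strictness the constants of `K` form `K^p`, and `L^p` consists of constants, so `K` and `L^p` are
linearly disjoint over `K^p`. Linear disjointness is symmetric, which gives MacLane's criterion.
-/

theorem Derivation.map_pow_char_eq_zero {R A : Type*} [CommSemiring R] [CommRing A] [Algebra R A]
    (p : ℕ) [CharP A p] (D : Derivation R A A) (a : A) : D (a ^ p) = 0 := by
  rw [D.leibniz_pow, nsmul_eq_mul, CharP.cast_eq_zero, zero_mul]

theorem Derivation.map_sum_mul_of_map_eq_zero {R A κ : Type*} [CommSemiring R] [CommRing A]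
    [Algebra R A] (D : Derivation R A A) (s : Finset κ) (c v : κ → A)
    (hv : ∀ j ∈ s, D (v j) = 0) : D (∑ j ∈ s, c j * v j) = ∑ j ∈ s, D (c j) * v j := by
  rw [map_sum]
  refine Finset.sum_congr rfl fun j hj => ?_
  rw [Derivation.leibniz, hv j hj, smul_zero, zero_add, smul_eq_mul, mul_comm]

theorem IntermediateField.eq_zero_of_sum_mul_eq_zero_of_derivation_constants {R F L ι κ : Type*}
    [CommSemiring R] [Field F] [Field L] [Algebra R L] [Algebra F L] (δ : ι → Derivation R L L)
    (A : IntermediateField F L) (hA : ∀ i, ∀ a ∈ A, δ i a ∈ A)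
    (hconst : ∀ a ∈ A, (∀ i, δ i a = 0) → a ∈ (⊥ : IntermediateField F L))
    {v : κ → L} (hv : ∀ i j, δ i (v j) = 0) (hli : LinearIndependent F v) (s : Finset κ) :
    ∀ g : κ → L, (∀ j ∈ s, g j ∈ A) → ∑ j ∈ s, g j * v j = 0 → ∀ j ∈ s, g j = 0 := by
  classical
  rw [linearIndependent_iff'] at hli
  induction s using Finset.induction_on with
  | empty => simp
  | insert j₀ s hj₀ ih =>
    intro g hgA hg
    rw [Finset.sum_insert hj₀] at hg
    have hgA' : ∀ j ∈ s, g j ∈ A := fun j hj => hgA j (Finset.mem_insert_of_mem hj)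
    by_cases h0 : g j₀ = 0
    · have hs := ih g hgA' (by simpa [h0] using hg)
      intro j hj
      rcases Finset.mem_insert.1 hj with rfl | hj
      exacts [h0, hs j hj]
    exfalso
    set c : κ → L := fun j => g j / g j₀
    have hcA : ∀ j ∈ s, c j ∈ A := fun j hj =>
      div_mem (hgA' j hj) (hgA j₀ (Finset.mem_insert_self _ _))
    have hc : v j₀ + ∑ j ∈ s, c j * v j = 0 := by
      have := congrArg (· / g j₀) hg
      simp only [zero_div, add_div, Finset.sum_div] at this
      rwa [mul_div_right_comm, div_self h0, one_mul,
        Finset.sum_congr rfl fun j _ => mul_div_right_comm _ _ _] at this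
    have hδc : ∀ i, ∀ j ∈ s, δ i (c j) = 0 := by
      intro i
      refine ih (fun j => δ i (c j)) (fun j hj => hA i _ (hcA j hj)) ?_
      have := congrArg (δ i) hc
      rwa [map_add, hv, zero_add, Derivation.map_sum_mul_of_map_eq_zero _ _ _ _ fun j _ => hv i j,
        map_zero] at this
    have hcF : ∀ j, ∃ f : F, j ∈ s → algebraMap F L f = c j := by
      intro j
      by_cases hj : j ∈ s
      · obtain ⟨f, hf⟩ := IntermediateField.mem_bot.1 (hconst _ (hcA j hj) fun i => hδc i j hj)
        exact ⟨f, fun _ => hf⟩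
      · exact ⟨0, fun h => absurd h hj⟩
    choose f hf using hcF
    have := hli (insert j₀ s) (Function.update f j₀ 1) ?_ j₀ (Finset.mem_insert_self _ _)
    · simp at this
    rw [Finset.sum_insert hj₀, Function.update_self, one_smul, ← hc]
    congr 1
    refine Finset.sum_congr rfl fun j hj => ?_
    rw [Function.update_of_ne (ne_of_mem_of_not_mem hj hj₀), Algebra.smul_def, hf j hj]

theorem IntermediateField.linearIndependent_of_derivation_constants {R F L ι κ : Type*}
    [CommSemiring R] [Field F] [Field L] [Algebra R L] [Algebra F L] (δ : ι → Derivation R L L)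
    (A : IntermediateField F L) (hA : ∀ i, ∀ a ∈ A, δ i a ∈ A)
    (hconst : ∀ a ∈ A, (∀ i, δ i a = 0) → a ∈ (⊥ : IntermediateField F L))
    {v : κ → L} (hv : ∀ i j, δ i (v j) = 0) (hli : LinearIndependent F v) :
    LinearIndependent A v := by
  rw [linearIndependent_iff']
  intro s g hg j hj
  simp only [Algebra.smul_def, IntermediateField.algebraMap_apply] at hg
  exact Subtype.ext <| eq_zero_of_sum_mul_eq_zero_of_derivation_constants δ A hA hconst hv hli s
    (fun j => g j) (fun j _ => (g j).2) hg j hj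

theorem mdeg_eq_degree {e : ℕ} (i : Fin e →₀ ℕ) : mdeg i = i.degree :=
  (Finsupp.degree_eq_sum i).symm

theorem antidiagonal_eq_pair_of_mdeg_eq_one {e : ℕ} {i : Fin e →₀ ℕ} (hi : mdeg i = 1) :
    Finset.HasAntidiagonal.antidiagonal i = {(0, i), (i, 0)} := by
  rw [mdeg_eq_degree] at hi
  ext ⟨a, b⟩
  simp only [Finset.HasAntidiagonal.mem_antidiagonal, Finset.mem_insert, Finset.mem_singleton,
    Prod.mk.injEq]
  constructor
  · rintro rfl
    have : a.degree + b.degree = 1 := by rw [← map_add, hi]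
    rcases Nat.eq_zero_or_pos a.degree with ha | ha
    · obtain rfl := (Finsupp.degree_eq_zero_iff a).1 ha
      simp
    · obtain rfl := (Finsupp.degree_eq_zero_iff b).1 (by omega)
      simp
  · rintro (⟨rfl, rfl⟩ | ⟨rfl, rfl⟩) <;> simp

namespace TruncHSDer

variable {k R : Type*} [CommRing k] [CommRing R] [Algebra k R] {e pm : ℕ}

theorem map_mul_of_mdeg_eq_one (D : TruncHSDer k R e pm) {i : Fin e →₀ ℕ} (hi : mdeg i = 1)
    (x y : R) : D.D i (x * y) = x • D.D i y + y • D.D i x := by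
  by_cases htrunc : ∃ t, pm ≤ i t
  · simp [D.D_trunc i htrunc]
  push Not at htrunc
  have hi0 : i ≠ 0 := by rintro rfl; simp [mdeg] at hi
  rw [D.D_mul i htrunc, antidiagonal_eq_pair_of_mdeg_eq_one hi,
    Finset.sum_pair (by simpa [eq_comm] using hi0), D.D_zero]
  simp only [LinearMap.id_apply, smul_eq_mul]
  ring

def derivation (D : TruncHSDer k R e pm) {i : Fin e →₀ ℕ} (hi : mdeg i = 1) :
    Derivation k R R :=
  Derivation.mk' (D.D i) (D.map_mul_of_mdeg_eq_one hi)

@[simp]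
theorem derivation_apply (D : TruncHSDer k R e pm) {i : Fin e →₀ ℕ} (hi : mdeg i = 1) (x : R) :
    D.derivation hi x = D.D i x :=
  rfl

end TruncHSDer

section PthPowers

variable (p : ℕ) [Fact p.Prime] (K L : Type*) [Field K] [Field L] [CharP K p] [Algebra K L]

/-- The subfield `K^p` of `L`. -/
def pthPowers : Subfield L := ((algebraMap K L).comp (frobenius K p)).fieldRange

variable {p K L}

theorem mem_pthPowers {z : L} : z ∈ pthPowers p K L ↔ ∃ y : K, algebraMap K L y ^ p = z := by
  simp [pthPowers, RingHom.mem_fieldRange, frobenius_def]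

theorem pthPowers_le_pthPowers_self [CharP L p] : pthPowers p K L ≤ pthPowers p L L := by
  intro z hz
  obtain ⟨y, rfl⟩ := mem_pthPowers.1 hz
  exact mem_pthPowers.2 ⟨algebraMap K L y, rfl⟩

theorem pthPowers_le_fieldRange : pthPowers p K L ≤ (algebraMap K L).fieldRange := by
  intro z hz
  obtain ⟨y, rfl⟩ := mem_pthPowers.1 hz
  exact ⟨y ^ p, map_pow _ _ _⟩

variable (p K L)

abbrev fieldRangeOverPthPowers : IntermediateField (pthPowers p K L) L :=
  (algebraMap K L).fieldRange.toIntermediateField fun z => pthPowers_le_fieldRange z.2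

abbrev pthPowersSelfOverPthPowers [CharP L p] : IntermediateField (pthPowers p K L) L :=
  (pthPowers p L L).toIntermediateField fun z => pthPowers_le_pthPowers_self z.2

end PthPowers

section LinearDisjoint

variable {p : ℕ} [Fact p.Prime] {k K L : Type*} [CommRing k] [Field K] [Field L] [CharP K p]
  [CharP L p] [Algebra k K] [Algebra k L] [Algebra K L] {e pm : ℕ}

theorem linearDisjoint_of_isStrictT (DK : TruncHSDer k K e pm) (DL : TruncHSDer k L e pm)
    (hext : ∀ i x, DL.D i (algebraMap K L x) = algebraMap K L (DK.D i x))
    (hstrict : IsStrictT p DK) :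
    (fieldRangeOverPthPowers p K L).LinearDisjoint (pthPowersSelfOverPthPowers p K L) := by
  set F := pthPowers p K L
  set A := fieldRangeOverPthPowers p K L
  set B := pthPowersSelfOverPthPowers p K L
  let δ : {i : Fin e →₀ ℕ // mdeg i = 1} → Derivation k L L := fun i => DL.derivation i.2
  have hA : ∀ i, ∀ a ∈ A, δ i a ∈ A := by
    rintro i _ ⟨x, rfl⟩
    exact ⟨DK.D i x, (hext i x).symm⟩
  have hconst : ∀ a ∈ A, (∀ i, δ i a = 0) → a ∈ (⊥ : IntermediateField F L) := by
    rintro _ ⟨x, rfl⟩ hx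
    obtain ⟨y, rfl⟩ := (hstrict x).1 fun i hi =>
      (algebraMap K L).injective (by simpa [δ, hext] using hx ⟨i, hi⟩)
    exact IntermediateField.mem_bot.2 ⟨⟨_, mem_pthPowers.2 ⟨y, (map_pow _ _ _).symm⟩⟩, rfl⟩
  refine .of_basis_right (Module.Basis.ofVectorSpace F B)
    (IntermediateField.linearIndependent_of_derivation_constants δ A hA hconst ?_ ?_)
  · intro i j
    obtain ⟨y, hy⟩ := mem_pthPowers.1 (Module.Basis.ofVectorSpace F B j).2
    simp only [Function.comp_apply, IntermediateField.coe_val]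
    rw [← hy]
    exact Derivation.map_pow_char_eq_zero p _ _
  · exact (Module.Basis.ofVectorSpace F B).linearIndependent.map' B.val.toLinearMap
      (LinearMap.ker_eq_bot.2 B.val.injective)

end LinearDisjoint

section Transport

variable {p : ℕ} [Fact p.Prime] {K L ι : Type*} [Field K] [Field L] [CharP K p] [Algebra K L]
  [Fintype ι]

theorem linearIndependent_pthPowers_of_sum_pow_mul_eq_zero {x : ι → K}
    (hx : ∀ a : ι → K, ∑ j, a j ^ p * x j = 0 → ∀ j, a j = 0) :
    LinearIndependent (pthPowers p K L) (algebraMap K L ∘ x) := by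
  rw [Fintype.linearIndependent_iff]
  intro g hg j
  choose a ha using fun j => mem_pthPowers.1 (g j).2
  have hsum : ∑ j, a j ^ p * x j = 0 := by
    apply (algebraMap K L).injective
    simpa [Subfield.smul_def, ← ha] using hg
  ext
  simp [← ha j, hx a hsum j, (Fact.out : p.Prime).ne_zero]

theorem eq_zero_of_sum_pow_mul_eq_zero [CharP L p] {v : ι → L}
    (hv : LinearIndependent (pthPowersSelfOverPthPowers p K L) v) (b : ι → L)
    (hb : ∑ j, b j ^ p * v j = 0) (j : ι) : b j = 0 := by
  rw [Fintype.linearIndependent_iff] at hv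
  have := hv (fun j => ⟨b j ^ p, mem_pthPowers.2 ⟨b j, rfl⟩⟩)
    (by simpa [Algebra.smul_def] using hb) j
  exact pow_eq_zero_iff (Fact.out : p.Prime).ne_zero |>.1 (congrArg Subtype.val this)

end Transport

universe u

theorem separable_of_strict_general
    (p : ℕ) [Fact p.Prime] (e m : ℕ)
    (k : Type u) [Field k] [CharP k p]
    (K L : Type u) [Field K] [Field L] [Algebra k K] [Algebra k L]
    [Algebra K L]
    (DK : TruncHSDer k K e (p ^ m)) (DL : TruncHSDer k L e (p ^ m))
    (hext : ∀ (i : Fin e →₀ ℕ) (x : K), DL.D i (algebraMap K L x) = algebraMap K L (DK.D i x))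
    (hstrict : IsStrictT p DK)
    (n : ℕ) (x : Fin n → K)
    (hind : ∀ a : Fin n → K, ∑ j, a j ^ p * x j = 0 → ∀ j, a j = 0) :
    ∀ b : Fin n → L, ∑ j, b j ^ p * algebraMap K L (x j) = 0 → ∀ j, b j = 0 := by
  have : CharP K p := charP_of_injective_algebraMap (algebraMap k K).injective p
  have : CharP L p := charP_of_injective_algebraMap (algebraMap k L).injective p
  have hx : LinearIndependent (pthPowers p K L)
      fun j => (⟨algebraMap K L (x j), x j, rfl⟩ : fieldRangeOverPthPowers p K L) :=
    .of_comp (fieldRangeOverPthPowers p K L).val.toLinearMap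
      (linearIndependent_pthPowers_of_sum_pow_mul_eq_zero hind)
  exact eq_zero_of_sum_pow_mul_eq_zero
    ((linearDisjoint_of_isStrictT DK DL hext hstrict).symm.linearIndependent_right hx)

/-- If `(K, D_K) ⊆ (L, D_L)` is an extension of `𝔤`-fields and `(K, D_K)`
is strict, then `K ⊆ L` is separable: by MacLane's criterion, `K` and `L^p` are linearly
disjoint over `K^p` inside `L`. -/
theorem separable_of_strict
    (p : ℕ) [Fact p.Prime] (e m : ℕ) (he : 0 < e) (hm : 0 < m)
    (k : Type u) [Field k] [CharP k p] [ExpChar k p] [PerfectRing k p]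
    (K L : Type u) [Field K] [Field L] [Algebra k K] [Algebra k L]
    [Algebra K L] [IsScalarTower k K L]
    (H : TruncHopf k e (p ^ m))
    (DK : TruncHSDer k K e (p ^ m)) (DL : TruncHSDer k L e (p ^ m))
    (hDK : IsGDer H DK) (hDL : IsGDer H DL)
    (hext : ∀ (i : Fin e →₀ ℕ) (x : K), DL.D i (algebraMap K L x) = algebraMap K L (DK.D i x))
    (hstrict : IsStrictT p DK)
    (n : ℕ) (x : Fin n → K)
    (hind : ∀ a : Fin n → K, ∑ j, a j ^ p * x j = 0 → ∀ j, a j = 0) :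
    ∀ b : Fin n → L, ∑ j, b j ^ p * algebraMap K L (x j) = 0 → ∀ j, b j = 0 :=
  separable_of_strict_general p e m k K L DK DL hext hstrict n x hind
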